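/- arXiv:0909.4469 — 2 statements merged into one kernel-verified Lean document; each statement's English description precedes it below -/
import Mathlib

section
/- Let P_1(s,t) = ẏ_s·x_s − (q_0/p)·y_s·ẋ_s, where dot denotes d/dt. If for some s the Puiseux expansion is y_s = c_0(s)x_s^{q_0/p} + c_1(s)x_s^{q_1/p} + (higher terms), with ord_t x_s = p, then ord_t P_1(s,·) = q_1 + p − 1 whenever c_1(s)≠0, and ord_t P_1(s,·) ≥ q_1 + p − 1 in general. -/
/-!
With `x = ξ ^ p`, the operator `y ↦ ẏ x - (q₀ / p) y ẋ` is linear in `y` and sends `ξ ^ k` to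
`(k - q₀) ξ ^ (k + p - 1) ξ̇`; in particular it kills the leading term `c₀ ξ ^ q₀`. Truncating the
Puiseux expansion after `ξ ^ q₁` leaves a remainder of order `≥ q₁ + 1`, whose image has order
`≥ q₁ + p`, while the image of `c₁ ξ ^ q₁` is `c₁ (q₁ - q₀) ξ ^ (q₁ + p - 1) ξ̇`, of order exactly
`q₁ + p - 1` when `c₁ ≠ 0` because `ord ξ = 1` and `ord ξ̇ = 0`.
-/

open PowerSeries

noncomputable def pderiv' (f : PowerSeries ℂ) : PowerSeries ℂ :=
  PowerSeries.mk fun n => ((n : ℂ) + 1) * coeff (n + 1) f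

lemma pderiv'_eq_derivative (f : ℂ⟦X⟧) : pderiv' f = d⁄dX ℂ f := by
  ext n
  simp [pderiv', coeff_derivative, mul_comm]

namespace PowerSeries

section Order

variable {R : Type*}

lemma le_order_derivative [CommSemiring R] {f : R⟦X⟧} {n : ℕ}
    (h : ((n + 1 : ℕ) : ℕ∞) ≤ f.order) : (n : ℕ∞) ≤ (d⁄dX R f).order := by
  refine nat_le_order _ _ fun i hi => ?_
  have hi' : ((i + 1 : ℕ) : ℕ∞) < f.order :=
    lt_of_lt_of_le (by exact_mod_cast Nat.succ_lt_succ hi) h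
  rw [coeff_derivative, coeff_of_lt_order _ hi', zero_mul]

lemma order_pow_mul_derivative [CommRing R] [IsDomain R] {ξ : R⟦X⟧}
    (hξ₀ : constantCoeff ξ = 0) (hξ₁ : coeff 1 ξ ≠ 0) (m : ℕ) :
    (ξ ^ m * d⁄dX R ξ).order = m := by
  have hξ : ξ.order = 1 := by
    rw [← Nat.cast_one, order_eq_nat]
    exact ⟨hξ₁, fun i hi => by rw [Nat.lt_one_iff.1 hi, coeff_zero_eq_constantCoeff_apply, hξ₀]⟩
  have hdξ : (d⁄dX R ξ).order = 0 := by
    rw [← Nat.cast_zero, order_eq_nat]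
    exact ⟨by simpa [coeff_derivative] using hξ₁, fun i hi => absurd hi (Nat.not_lt_zero i)⟩
  rw [order_mul, order_pow, hξ, hdξ, add_zero, nsmul_one]

lemma order_add_of_order_eq_of_lt_order [Semiring R] {f g : R⟦X⟧} {N : ℕ}
    (hf : f.order = N) (hg : (N : ℕ∞) < g.order) : (f + g).order = N := by
  rw [order_add_of_order_ne _ _ (hf ▸ hg.ne), hf, min_eq_left hg.le]

lemma order_C_mul_of_ne_zero {K : Type*} [Field K] {b : K} (hb : b ≠ 0) (f : K⟦X⟧) :
    (C b * f).order = f.order := by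
  rw [order_mul, order_zero_of_unit ((isUnit_iff_ne_zero.2 hb).map C), zero_add]

end Order

lemma le_order_sub_sum_C_mul_pow {R : Type*} [CommRing R] {y ξ : R⟦X⟧} {c : ℕ → R}
    (hξ : constantCoeff ξ = 0)
    (hy : ∀ n, coeff n y = ∑ k ∈ Finset.range (n + 1), c k * coeff n (ξ ^ k)) (N : ℕ) :
    ((N + 1 : ℕ) : ℕ∞) ≤ (y - ∑ k ∈ Finset.range (N + 1), C (c k) * ξ ^ k).order := by
  refine nat_le_order _ _ fun i hi => ?_
  simp only [map_sub, map_sum, coeff_C_mul, hy, sub_eq_zero]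
  refine Finset.sum_subset (Finset.range_subset_range.2 (by omega)) fun k _ hk => ?_
  have hik : (i : ℕ∞) < (ξ ^ k).order :=
    lt_of_lt_of_le (by exact_mod_cast (by simpa using hk : i < k))
      (le_order_pow_of_constantCoeff_eq_zero k hξ)
  rw [coeff_of_lt_order _ hik, mul_zero]

lemma sum_range_C_mul_pow_eq_of_gap {R : Type*} [CommSemiring R] (ξ : R⟦X⟧) {c : ℕ → R}
    {q₀ q₁ : ℕ} (hq : q₀ < q₁) (hlow : ∀ k, k < q₀ → c k = 0)
    (hmid : ∀ k, q₀ < k → k < q₁ → c k = 0) :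
    ∑ k ∈ Finset.range (q₁ + 1), C (c k) * ξ ^ k = C (c q₀) * ξ ^ q₀ + C (c q₁) * ξ ^ q₁ := by
  refine Finset.sum_eq_add _ _ hq.ne (fun k hk hne => ?_) (fun h => ?_) (fun h => ?_)
  · rcases lt_trichotomy k q₀ with h | h | h
    · rw [hlow k h, map_zero, zero_mul]
    · exact absurd h hne.1
    · rw [hmid k h (by simp at hk; omega), map_zero, zero_mul]
  · exact absurd (Finset.mem_range.2 (by omega)) h
  · exact absurd (Finset.mem_range.2 (by omega)) h

section TwistedWronskian

variable {K : Type*} [Field K]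

/-- The paper's `P₁ = ẏ x - (q₀ / p) y ẋ` is `twistedWronskian (q₀ / p) x y`. -/
noncomputable def twistedWronskian (a : K) (x y : K⟦X⟧) : K⟦X⟧ :=
  d⁄dX K y * x - C a * y * d⁄dX K x

lemma twistedWronskian_add (a : K) (x y z : K⟦X⟧) :
    twistedWronskian a x (y + z) = twistedWronskian a x y + twistedWronskian a x z := by
  simp only [twistedWronskian, map_add]
  ring

lemma twistedWronskian_C_mul (a b : K) (x y : K⟦X⟧) :
    twistedWronskian a x (C b * y) = C b * twistedWronskian a x y := by
  simp only [twistedWronskian, ← smul_eq_C_mul, Derivation.map_smul]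
  simp only [smul_eq_C_mul]
  ring

lemma twistedWronskian_pow_pow [CharZero K] (ξ : K⟦X⟧) {p : ℕ} (hp : p ≠ 0) (q k : ℕ) :
    twistedWronskian ((q : K) / p) (ξ ^ p) (ξ ^ k) =
      C ((k : K) - q) * (ξ ^ (k + p - 1) * d⁄dX K ξ) := by
  obtain ⟨p, rfl⟩ := Nat.exists_eq_add_one_of_ne_zero hp
  have hq : C ((q : K) / (p + 1 : ℕ)) * ((p + 1 : ℕ) : K⟦X⟧) = q := by
    rw [← map_natCast C, ← map_mul, div_mul_cancel₀ _ (Nat.cast_ne_zero.2 hp), map_natCast]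
  simp only [twistedWronskian, derivative_pow, map_sub, map_natCast, Nat.add_sub_cancel]
  rcases k with _ | k
  · simp only [pow_zero, Nat.cast_zero, zero_mul, zero_add, zero_sub, Nat.add_sub_cancel]
    linear_combination (-(ξ ^ p * d⁄dX K ξ)) * hq
  · rw [show k + 1 + (p + 1) - 1 = k + 1 + p by omega, Nat.add_sub_cancel]
    linear_combination (-(ξ ^ (k + 1) * ξ ^ p * d⁄dX K ξ)) * hq

lemma le_order_twistedWronskian (a : K) {x r : K⟦X⟧} {m n : ℕ} (hn : n ≠ 0)
    (hx : (n : ℕ∞) ≤ x.order) (hr : ((m + 1 : ℕ) : ℕ∞) ≤ r.order) :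
    ((m + n : ℕ) : ℕ∞) ≤ (twistedWronskian a x r).order := by
  obtain ⟨n, rfl⟩ := Nat.exists_eq_add_one_of_ne_zero hn
  have h₁ : ((m + (n + 1) : ℕ) : ℕ∞) ≤ (d⁄dX K r * x).order :=
    calc ((m + (n + 1) : ℕ) : ℕ∞) = (m : ℕ∞) + ((n + 1 : ℕ) : ℕ∞) := by push_cast; ring
      _ ≤ _ := add_le_add (le_order_derivative hr) hx
      _ ≤ _ := le_order_mul _ _
  have h₂ : ((m + (n + 1) : ℕ) : ℕ∞) ≤ (C a * r * d⁄dX K x).order :=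
    calc ((m + (n + 1) : ℕ) : ℕ∞) = 0 + ((m + 1 : ℕ) : ℕ∞) + (n : ℕ∞) := by push_cast; ring
      _ ≤ _ := add_le_add (add_le_add zero_le hr) (le_order_derivative hx)
      _ ≤ _ := (add_le_add (le_order_mul _ _) le_rfl).trans (le_order_mul _ _)
  rw [twistedWronskian, sub_eq_add_neg]
  exact (le_min h₁ (by rwa [order_neg])).trans (min_order_le_order_add _ _)

end TwistedWronskian

end PowerSeries

theorem stmt7_general (p q0 q1 : ℕ) (hp : 1 < p) (hq : q0 < q1)
    (x y ξ : PowerSeries ℂ) (c : ℕ → ℂ)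
    (hξ0 : constantCoeff ξ = 0) (hξ1 : coeff 1 ξ ≠ 0)
    (hξp : ξ ^ p = x)
    (hpuis : ∀ n, coeff n y =
      ∑ k ∈ Finset.range (n + 1), c k * coeff n (ξ ^ k))
    (hlow : ∀ k, k < q0 → c k = 0)
    (hmid : ∀ k, q0 < k → k < q1 → c k = 0) :
    (c q1 ≠ 0 →
      (pderiv' y * x - (C ((q0 : ℂ) / p)) * y * pderiv' x).order
        = (q1 + p - 1 : ℕ)) ∧
    ((q1 + p - 1 : ℕ) : ℕ∞) ≤
      (pderiv' y * x - (C ((q0 : ℂ) / p)) * y * pderiv' x).order := by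
  subst hξp
  simp only [pderiv'_eq_derivative]
  change (_ → (twistedWronskian _ (ξ ^ p) y).order = _) ∧ _ ≤ (twistedWronskian _ (ξ ^ p) y).order
  have hp₀ : p ≠ 0 := by omega
  set r := y - ∑ k ∈ Finset.range (q1 + 1), C (c k) * ξ ^ k
  have hy : y = C (c q0) * ξ ^ q0 + C (c q1) * ξ ^ q1 + r := by
    rw [← sum_range_C_mul_pow_eq_of_gap ξ hq hlow hmid]; ring
  have hL : twistedWronskian ((q0 : ℂ) / p) (ξ ^ p) y =
      C (c q1 * (q1 - q0)) * (ξ ^ (q1 + p - 1) * d⁄dX ℂ ξ) +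
        twistedWronskian ((q0 : ℂ) / p) (ξ ^ p) r := by
    rw [hy, twistedWronskian_add, twistedWronskian_add, twistedWronskian_C_mul,
      twistedWronskian_C_mul, twistedWronskian_pow_pow ξ hp₀, twistedWronskian_pow_pow ξ hp₀,
      sub_self, map_zero, map_mul]
    ring
  have hr : ((q1 + p - 1 : ℕ) : ℕ∞) < (twistedWronskian ((q0 : ℂ) / p) (ξ ^ p) r).order :=
    lt_of_lt_of_le (by exact_mod_cast (by omega : q1 + p - 1 < q1 + p))
      (le_order_twistedWronskian _ hp₀ (le_order_pow_of_constantCoeff_eq_zero p hξ0)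
        (le_order_sub_sum_C_mul_pow hξ0 hpuis q1))
  have hM := order_pow_mul_derivative hξ0 hξ1 (q1 + p - 1)
  rw [hL]
  refine ⟨fun hc => order_add_of_order_eq_of_lt_order ?_ hr, ?_⟩
  · exact (order_C_mul_of_ne_zero
      (mul_ne_zero hc (sub_ne_zero.2 (Nat.cast_injective.ne hq.ne'))) _).trans hM
  · refine (le_min ?_ hr.le).trans (min_order_le_order_add _ _)
    exact (hM.symm.trans_le le_add_self).trans (le_order_mul _ _)

/-- Let P₁ = ẏ·x − (q₀/p)·y·ẋ. If y has the Puiseux expansion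
y = c₀x^{q₀/p} + c₁x^{q₁/p} + (higher terms) with ord_t x = p (so x = ξᵖ with
ord ξ = 1), then ord_t P₁ = q₁+p−1 whenever c₁ ≠ 0 (here c₁ = c q₁), and
ord_t P₁ ≥ q₁+p−1 in general. -/
theorem stmt7 (p q0 q1 : ℕ) (hp : 1 < p) (hq : q0 < q1)
    (x y ξ : PowerSeries ℂ) (c : ℕ → ℂ)
    (hξ0 : constantCoeff ξ = 0) (hξ1 : coeff 1 ξ ≠ 0)
    (hξp : ξ ^ p = x)
    (hpuis : ∀ n, coeff n y =
      ∑ k ∈ Finset.range (n + 1), c k * coeff n (ξ ^ k))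
    (hlow : ∀ k, k < q0 → c k = 0)
    (hmid : ∀ k, q0 < k → k < q1 → c k = 0)
    (hc0 : c q0 ≠ 0) :
    (c q1 ≠ 0 →
      (pderiv' y * x - (C ((q0 : ℂ) / p)) * y * pderiv' x).order
        = (q1 + p - 1 : ℕ)) ∧
    ((q1 + p - 1 : ℕ) : ℕ∞) ≤
      (pderiv' y * x - (C ((q0 : ℂ) / p)) * y * pderiv' x).order :=
  stmt7_general p q0 q1 hp hq x y ξ c hξ0 hξ1 hξp hpuis hlow hmid
end

section
/- (Generating function for first derivatives) With u=x^{1/p}, w=y^{1/q}, z=(1+g_1w+g_2w²+...)^{1/p} (so u=wz), the generating series G_i = Σ_{l≥1}(∂g_l/∂c_i)w^l satisfies G_i = −(p/q)·w^i·z^{p+q+i−1}·(z + w·∂z/∂w). In particular ∂w/∂c_i = (1/q)·w^{i+1}·z^{q+i}. -/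
/-!
Write the inverse expansion as `Φ(w, z) = ∑ₖ cₖ wᵏ z^(q+k) = 1` with `c₀ = 1`. Applying to this
identity the derivation `∂/∂cᵢ` (acting on coefficients) and the Euler operator `w ∂/∂w` gives
`wⁱ z^(q+i) + Φ_z · ∂ᵢz = 0` and `∑ₖ k cₖ wᵏ z^(q+k) + Φ_z · w z' = 0`, while
`z Φ_z = q Φ + ∑ₖ k cₖ wᵏ z^(q+k)`. Hence `Φ_z (z + w z') = q`, and eliminating `Φ_z` yields
`q ∂ᵢz = -wⁱ z^(q+i) (z + w z')`; the formula for `∂ᵢ(z^p)` is the power rule.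
For the second formula, `∂ᵢ` applied to `w^q = u^q + ∑ₖ cₖ u^(q+k)` gives
`q w^(q-1) ∂ᵢw = u^(q+i) = (w Z)^(q+i)`, and `w^(q-1)` cancels in the domain of power series.
-/

open PowerSeries

/-- Coefficients are polynomials in the Puiseux coefficients c₁,c₂,…
(variable i of `MvPolynomial ℕ ℂ` stands for c_i). -/
noncomputable abbrev A' : Type := MvPolynomial ℕ ℂ

/-- Formal derivative ∂/∂w of a power series in w. -/
noncomputable def dW (f : PowerSeries A') : PowerSeries A' :=
  PowerSeries.mk fun n => ((n : A') + 1) * coeff (R := A') (n + 1) f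

theorem natCast_mul_pow_pred_mul_pow {S : Type*} [CommSemiring S] (x : S) (n m : ℕ) :
    (n : S) * x ^ (n - 1) * x ^ m = n * x ^ (n + m - 1) := by
  rcases n with _ | n
  · simp
  · rw [mul_assoc, ← pow_add]
    congr 3
    omega

namespace Derivation

theorem natCast_mul_apply_of_apply_pow_eq {k S : Type*} [CommRing k] [CommRing S] [IsDomain S]
    [Algebra k S] (D : Derivation k S S) {W Z : S} {q i : ℕ} (hW : W ≠ 0) (hq : q ≠ 0)
    (h : D (W ^ q) = (W * Z) ^ (q + i)) :
    (q : S) * D W = W ^ (i + 1) * Z ^ (q + i) := by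
  refine mul_left_cancel₀ (pow_ne_zero (q - 1) hW) ?_
  calc W ^ (q - 1) * ((q : S) * D W) = D (W ^ q) := by
        rw [D.leibniz_pow, nsmul_eq_mul, smul_eq_mul]
        ring
    _ = W ^ (q - 1) * (W ^ (i + 1) * Z ^ (q + i)) := by
        rw [h, mul_pow, ← mul_assoc, ← pow_add]
        congr 2
        omega

variable {k R : Type*} [CommSemiring k] [CommSemiring R] [Algebra k R]

noncomputable def mapPowerSeries (d : Derivation k R R) : Derivation k R⟦X⟧ R⟦X⟧ where
  toFun f := PowerSeries.mk fun n => d (coeff n f)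
  map_add' f g := by ext n; simp
  map_smul' c f := by ext n; simp
  map_one_eq_zero' := by ext n; simp [coeff_one, apply_ite d]
  leibniz' f g := by
    ext n
    simp only [LinearMap.coe_mk, AddHom.coe_mk, coeff_mk, map_add, coeff_mul, map_sum, leibniz,
      smul_eq_mul, Finset.sum_add_distrib]
    congr 1
    rw [← Finset.Nat.sum_antidiagonal_swap]
    rfl

@[simp]
theorem coeff_mapPowerSeries (d : Derivation k R R) (f : R⟦X⟧) (n : ℕ) :
    coeff n (d.mapPowerSeries f) = d (coeff n f) := by
  simp [mapPowerSeries]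

theorem mapPowerSeries_C_mul_X_pow (d : Derivation k R R) (r : R) (n : ℕ) :
    d.mapPowerSeries (C r * X ^ n) = C (d r) * X ^ n := by
  ext m
  rw [coeff_mapPowerSeries, coeff_C_mul_X_pow, coeff_C_mul_X_pow]
  split_ifs <;> simp

theorem mapPowerSeries_X (d : Derivation k R R) : d.mapPowerSeries X = 0 := by
  simpa using d.mapPowerSeries_C_mul_X_pow 1 1

end Derivation

namespace MvPolynomial

variable (K : Type*) [CommRing K]

/-- The generic coefficients `c₀ = 1, cₖ = X k` of `w ^ q = u ^ q + c₁ u ^ (q + 1) + ⋯`. -/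
noncomputable def puiseuxCoeff (k : ℕ) : MvPolynomial ℕ K :=
  if k = 0 then 1 else X k

variable {K}

theorem pderiv_puiseuxCoeff {i : ℕ} (hi : i ≠ 0) :
    (fun k => pderiv i (puiseuxCoeff K k)) = Pi.single i 1 := by
  ext1 k
  rcases eq_or_ne k i with rfl | hk
  · simp [puiseuxCoeff, hi]
  · rw [Pi.single_eq_of_ne hk]
    by_cases hk0 : k = 0 <;> simp [puiseuxCoeff, hk0, pderiv_X_of_ne hk]

end MvPolynomial

namespace PowerSeries

variable {R : Type*} [CommRing R]

/-- `shiftSum a f = ∑ₖ a k • X ^ k * f k`, an `X`-adically convergent sum. -/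
noncomputable def shiftSum (a : ℕ → R) (f : ℕ → R⟦X⟧) : R⟦X⟧ :=
  PowerSeries.mk fun n => ∑ k ∈ Finset.range (n + 1), a k * coeff (n - k) (f k)

section ShiftSum

variable (a b : ℕ → R) (f : ℕ → R⟦X⟧)

theorem coeff_shiftSum (n : ℕ) :
    coeff n (shiftSum a f) = ∑ k ∈ Finset.range (n + 1), a k * coeff (n - k) (f k) :=
  coeff_mk _ _

theorem X_pow_dvd_shiftSum_sub (N : ℕ) :
    X ^ (N + 1) ∣ shiftSum a f - ∑ k ∈ Finset.range (N + 1), C (a k) * X ^ k * f k := by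
  rw [X_pow_dvd_iff]
  intro m hm
  rw [map_sub, coeff_shiftSum, map_sum, sub_eq_zero,
    ← Finset.sum_range_add_sum_Ico _ (show m + 1 ≤ N + 1 by omega),
    Finset.sum_eq_zero (s := Finset.Ico _ _), add_zero]
  · refine Finset.sum_congr rfl fun k hk => ?_
    rw [mul_assoc, coeff_C_mul, coeff_X_pow_mul', if_pos (by simp at hk; omega)]
  · intro k hk
    rw [mul_assoc, coeff_C_mul, coeff_X_pow_mul', if_neg (by simp at hk; omega), mul_zero]

theorem eq_shiftSum_of_X_pow_dvd {F : R⟦X⟧}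
    (h : ∀ N, X ^ (N + 1) ∣ F - ∑ k ∈ Finset.range (N + 1), C (a k) * X ^ k * f k) :
    F = shiftSum a f := by
  ext n
  have hdvd := dvd_sub (h n) (X_pow_dvd_shiftSum_sub a f n)
  rw [sub_sub_sub_cancel_right, X_pow_dvd_iff] at hdvd
  simpa [sub_eq_zero] using hdvd n n.lt_succ_self

theorem shiftSum_mul (h : R⟦X⟧) : shiftSum a f * h = shiftSum a (fun k => f k * h) := by
  refine eq_shiftSum_of_X_pow_dvd _ _ fun N => ?_
  simpa only [sub_mul, Finset.sum_mul, mul_assoc] using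
    (X_pow_dvd_shiftSum_sub a f N).mul_right h

theorem shiftSum_add_left : shiftSum (a + b) f = shiftSum a f + shiftSum b f := by
  ext n
  simp [coeff_shiftSum, add_mul, Finset.sum_add_distrib]

theorem shiftSum_smul_left (r : R) : shiftSum (r • a) f = C r * shiftSum a f := by
  ext n
  simp [coeff_shiftSum, Finset.mul_sum, mul_assoc]

theorem shiftSum_C_mul (r : ℕ → R) :
    shiftSum a (fun k => C (r k) * f k) = shiftSum (a * r) f := by
  ext n
  simp [coeff_shiftSum, mul_assoc]

theorem shiftSum_single (i : ℕ) (r : R) : shiftSum (Pi.single i r) f = C r * X ^ i * f i := by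
  ext n
  rw [coeff_shiftSum, mul_assoc, coeff_C_mul, coeff_X_pow_mul']
  split_ifs with hi
  · rw [Finset.sum_eq_single_of_mem i (by simpa [Nat.lt_succ_iff] using hi)
      fun k _ hk => by simp [hk], Pi.single_eq_same]
  · rw [mul_zero]
    refine Finset.sum_eq_zero fun k hk => ?_
    rw [Pi.single_eq_of_ne (by simp at hk; omega), zero_mul]

/-- `X ∣ D X` makes `D` preserve `X`-adic convergence, so it can be applied term by term. -/
theorem _root_.Derivation.map_shiftSum {k : Type*} [CommRing k] [Algebra k R]
    (D : Derivation k R⟦X⟧ R⟦X⟧) (hD : ∀ k, D (C (a k) * X ^ k) = C (b k) * X ^ k)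
    (hX : X ∣ D X) :
    D (shiftSum a f) = shiftSum b f + shiftSum a (fun k => D (f k)) := by
  rw [← sub_eq_iff_eq_add]
  refine eq_shiftSum_of_X_pow_dvd _ _ fun N => ?_
  obtain ⟨g, hg⟩ := X_pow_dvd_shiftSum_sub a f N
  have hpartial : D (∑ k ∈ Finset.range (N + 1), C (a k) * X ^ k * f k)
      = ∑ k ∈ Finset.range (N + 1), C (b k) * X ^ k * f k
        + ∑ k ∈ Finset.range (N + 1), C (a k) * X ^ k * D (f k) := by
    rw [map_sum, ← Finset.sum_add_distrib]
    refine Finset.sum_congr rfl fun k _ => ?_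
    rw [Derivation.leibniz, hD, smul_eq_mul, smul_eq_mul]
    ring
  have hrem : X ^ (N + 1) ∣ D (X ^ (N + 1) * g) := by
    obtain ⟨h, hh⟩ := hX
    rw [Derivation.leibniz, Derivation.leibniz_pow, hh, Nat.add_sub_cancel]
    exact dvd_add (dvd_mul_right _ _) (Dvd.intro (g * (N + 1) * h) (by simp; ring))
  convert dvd_sub hrem (X_pow_dvd_shiftSum_sub a (fun k => D (f k)) N) using 1
  rw [← hg, map_sub, hpartial]
  ring

end ShiftSum

variable (R) in
noncomputable def euler : Derivation R R⟦X⟧ R⟦X⟧ := (X : R⟦X⟧) • d⁄dX R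

theorem euler_apply (f : R⟦X⟧) : euler R f = X * d⁄dX R f := rfl

theorem euler_C_mul_X_pow (r : R) (k : ℕ) : euler R (C r * X ^ k) = C (k * r) * X ^ k := by
  cases k with
  | zero => simp [euler_apply]
  | succ k =>
    simp only [euler_apply, Derivation.leibniz, Derivation.leibniz_pow, derivative_X,
      derivative_C, smul_eq_mul, nsmul_eq_mul, map_mul, map_natCast, Nat.add_sub_cancel]
    ring

theorem X_dvd_euler_X : X ∣ euler R X := Dvd.intro _ (euler_apply X).symm

section ImplicitDerivative

variable {k : Type*} [CommRing k] [Algebra k R] {a b : ℕ → R} {q : ℕ} {z : R⟦X⟧}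

/-- The second factor is `∂Φ/∂z` for `Φ(X, z) = shiftSum a (fun k => z ^ (q + k))`. -/
theorem shiftSum_pow_chain_rule (D : Derivation k R⟦X⟧ R⟦X⟧)
    (hD : ∀ k, D (C (a k) * X ^ k) = C (b k) * X ^ k) (hX : X ∣ D X)
    (hS : shiftSum a (fun k => z ^ (q + k)) = 1) :
    shiftSum b (fun k => z ^ (q + k))
      + shiftSum a (fun k => ((q + k : ℕ) : R⟦X⟧) * z ^ (q + k - 1)) * D z = 0 := by
  have := congrArg D hS
  rw [D.map_shiftSum a b _ hD hX, D.map_one_eq_zero] at this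
  simpa only [Derivation.leibniz_pow, shiftSum_mul, nsmul_eq_mul, smul_eq_mul, mul_assoc]
    using this

theorem natCast_mul_derivation_of_shiftSum_pow_eq_one (D : Derivation k R⟦X⟧ R⟦X⟧)
    (hD : ∀ k, D (C (a k) * X ^ k) = C (b k) * X ^ k) (hX : X ∣ D X)
    (hS : shiftSum a (fun k => z ^ (q + k)) = 1) :
    (q : R⟦X⟧) * D z = -(shiftSum b (fun k => z ^ (q + k)) * (z + X * d⁄dX R z)) := by
  set M := shiftSum a (fun k => ((q + k : ℕ) : R⟦X⟧) * z ^ (q + k - 1))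
  have hDz := shiftSum_pow_chain_rule D hD hX hS
  have hEz := shiftSum_pow_chain_rule (euler R) (fun k => euler_C_mul_X_pow (a k) k)
    X_dvd_euler_X hS
  have hMz : M * z = q + shiftSum (fun k => k * a k) (fun k => z ^ (q + k)) := by
    have hpow (n : ℕ) : (n : R⟦X⟧) * z ^ (n - 1) * z = C (n : R) * z ^ n := by
      simpa using natCast_mul_pow_pred_mul_pow z n 1
    have hcoeff : a * (fun k => ((q + k : ℕ) : R)) = (q : R) • a + fun k => k * a k := by
      ext k
      simp only [Pi.mul_apply, Pi.add_apply, Pi.smul_apply, smul_eq_mul, Nat.cast_add]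
      ring
    rw [shiftSum_mul, funext fun k => hpow (q + k), shiftSum_C_mul, hcoeff, shiftSum_add_left,
      shiftSum_smul_left, hS, mul_one, map_natCast]
  rw [euler_apply] at hEz
  linear_combination (-D z) * hMz + (z + X * d⁄dX R z) * hDz - D z * hEz

end ImplicitDerivative

section Puiseux

variable {K : Type*} [CommRing K]

theorem coeff_shiftSum_puiseuxCoeff (f : ℕ → (MvPolynomial ℕ K)⟦X⟧) (n : ℕ) :
    coeff n (shiftSum (MvPolynomial.puiseuxCoeff K) f)
      = coeff n (f 0)
        + ∑ k ∈ Finset.Icc 1 n, MvPolynomial.X k * coeff (n - k) (f k) := by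
  rw [coeff_shiftSum, Finset.range_eq_Ico,
    Finset.sum_eq_sum_Ico_succ_bot (by omega : 0 < n + 1), zero_add,
    Finset.Ico_add_one_right_eq_Icc]
  simp only [MvPolynomial.puiseuxCoeff, if_pos, one_mul, Nat.sub_zero]
  congr 1
  exact Finset.sum_congr rfl fun k hk => by rw [if_neg (by simp at hk; omega)]

theorem natCast_mul_mapPowerSeries_pderiv {q i : ℕ} (hi : i ≠ 0) {z : (MvPolynomial ℕ K)⟦X⟧}
    (hinv : ∀ n, coeff n (z ^ q)
        + ∑ k ∈ Finset.Icc 1 n, MvPolynomial.X k * coeff (n - k) (z ^ (q + k))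
      = if n = 0 then 1 else 0) :
    (q : (MvPolynomial ℕ K)⟦X⟧) * (MvPolynomial.pderiv i).mapPowerSeries z
      = -(X ^ i * z ^ (q + i) * (z + X * d⁄dX _ z)) := by
  have hS : shiftSum (MvPolynomial.puiseuxCoeff K) (fun k => z ^ (q + k)) = 1 := by
    refine ext fun n => ?_
    rw [coeff_shiftSum_puiseuxCoeff, add_zero, coeff_one, hinv]
  have hD (k : ℕ) :
      (MvPolynomial.pderiv i).mapPowerSeries (C (MvPolynomial.puiseuxCoeff K k) * X ^ k)
        = C (Pi.single (M := fun _ => MvPolynomial ℕ K) i 1 k) * X ^ k := by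
    rw [Derivation.mapPowerSeries_C_mul_X_pow, ← congrFun (MvPolynomial.pderiv_puiseuxCoeff hi) k]
  have hX : X ∣ (MvPolynomial.pderiv i).mapPowerSeries (X : (MvPolynomial ℕ K)⟦X⟧) := by
    rw [Derivation.mapPowerSeries_X]
    exact dvd_zero _
  simpa [shiftSum_single] using natCast_mul_derivation_of_shiftSum_pow_eq_one _ hD hX hS

theorem mapPowerSeries_pderiv_pow {q i : ℕ} (hi : i ≠ 0) {W : (MvPolynomial ℕ K)⟦X⟧}
    (hWq : ∀ n, coeff n (W ^ q)
      = if n < q then 0 else if n = q then 1 else MvPolynomial.X (n - q)) :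
    (MvPolynomial.pderiv i).mapPowerSeries (W ^ q) = X ^ (q + i) := by
  ext n
  rw [Derivation.coeff_mapPowerSeries, hWq n, coeff_X_pow]
  rcases lt_trichotomy n q with hn | rfl | hn
  · simp [hn, show n ≠ q + i by omega]
  · simp [hi]
  · rw [if_neg (by omega), if_neg (by omega)]
    by_cases hni : n = q + i
    · simp [hni]
    · rw [if_neg hni, MvPolynomial.pderiv_X_of_ne (by omega)]

end Puiseux

end PowerSeries

theorem dW_eq_derivative (f : PowerSeries A') : dW f = d⁄dX A' f := by
  ext n
  simp [dW, coeff_derivative, mul_comm]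

theorem stmt18_general (p q : ℕ) (hq : 1 < q) (i : ℕ) (hi : 1 ≤ i)
    (g : ℕ → A') (hg0 : g 0 = 1)
    (z : PowerSeries A')
    (hzp : ∀ n, coeff (R := A') n (z ^ p) = if n = 0 then 1 else g n)
    (hinv : ∀ n, coeff (R := A') n (z ^ q)
        + ∑ k ∈ Finset.Icc 1 n, (MvPolynomial.X k : A') * coeff (R := A') (n - k) (z ^ (q + k))
      = if n = 0 then 1 else 0)
    (W Z : PowerSeries A')
    (hWq : ∀ n, coeff (R := A') n (W ^ q)
      = if n < q then 0 else if n = q then 1 else MvPolynomial.X (n - q))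
    (hWZ : PowerSeries.X = W * Z) :
    (PowerSeries.mk fun l => MvPolynomial.pderiv i (g l))
      = - PowerSeries.C (R := A') (MvPolynomial.C ((p : ℂ) / q))
          * PowerSeries.X ^ i * z ^ (p + q + i - 1)
          * (z + PowerSeries.X * dW z) ∧
    (PowerSeries.mk fun n => MvPolynomial.pderiv i (coeff (R := A') n W))
      = PowerSeries.C (R := A') (MvPolynomial.C (1 / (q : ℂ)))
          * W ^ (i + 1) * Z ^ (q + i) := by
  set D := (MvPolynomial.pderiv i : Derivation ℂ A' A').mapPowerSeries
  have hi0 : i ≠ 0 := by omega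
  set r : A'⟦X⟧ := C (MvPolynomial.C (1 / (q : ℂ)))
  have hr : r * q = 1 := by
    rw [← map_natCast (C (R := A')), ← map_natCast (MvPolynomial.C (σ := ℕ)), ← map_mul,
      ← map_mul, div_mul_cancel₀ _ (by norm_cast; omega : (q : ℂ) ≠ 0), map_one, map_one]
  constructor
  · have hg : (PowerSeries.mk fun l => MvPolynomial.pderiv i (g l)) = D (z ^ p) := by
      refine PowerSeries.ext fun n => ?_
      rw [coeff_mk, Derivation.coeff_mapPowerSeries, hzp]
      split_ifs with hn <;> simp [hn, hg0]
    have hp : (C (MvPolynomial.C ((p : ℂ) / q)) : A'⟦X⟧) = r * p := by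
      rw [div_eq_mul_one_div, mul_comm, map_mul, map_mul, map_natCast, map_natCast]
    rw [hg, D.leibniz_pow, dW_eq_derivative, hp, nsmul_eq_mul, smul_eq_mul,
      show p + q + i - 1 = p + (q + i) - 1 by omega]
    linear_combination (-(p * z ^ (p - 1) * D z)) * hr
      + r * p * z ^ (p - 1) * natCast_mul_mapPowerSeries_pderiv hi0 hinv
      - r * X ^ i * (z + X * d⁄dX A' z) * natCast_mul_pow_pred_mul_pow z p (q + i)
  · have hDW := D.natCast_mul_apply_of_apply_pow_eq (W := W) (by rintro rfl; simp at hWZ)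
      (by omega : q ≠ 0) (by rw [← hWZ]; exact mapPowerSeries_pderiv_pow hi0 hWq)
    change D W = _
    linear_combination r * hDW - D W * hr

/-- Generating function for first derivatives: with u=x^{1/p},
w=y^{1/q}, z=(1+g₁w+g₂w²+…)^{1/p} (so u=wz and 1 = z^q + Σ_k c_k w^k z^{q+k}),
the generating series G_i = Σ_l (∂g_l/∂c_i) w^l satisfies
G_i = −(p/q)·w^i·z^{p+q+i−1}·(z + w·∂z/∂w). In particular (in the variable u,
where w^q = u^q + Σ c_k u^{q+k} and u = w·z) one has
∂w/∂c_i = (1/q)·w^{i+1}·z^{q+i}. -/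
theorem stmt18 (p q : ℕ) (hp : 1 < p) (hq : 1 < q) (i : ℕ) (hi : 1 ≤ i)
    (g : ℕ → A') (hg0 : g 0 = 1)
    (z : PowerSeries A') (hz0 : constantCoeff (R := A') z = 1)
    (hzp : ∀ n, coeff (R := A') n (z ^ p) = if n = 0 then 1 else g n)
    (hinv : ∀ n, coeff (R := A') n (z ^ q)
        + ∑ k ∈ Finset.Icc 1 n, (MvPolynomial.X k : A') * coeff (R := A') (n - k) (z ^ (q + k))
      = if n = 0 then 1 else 0)
    (W Z : PowerSeries A')
    (hW0 : constantCoeff (R := A') W = 0) (hW1 : coeff (R := A') 1 W = 1)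
    (hWq : ∀ n, coeff (R := A') n (W ^ q)
      = if n < q then 0 else if n = q then 1 else MvPolynomial.X (n - q))
    (hWZ : PowerSeries.X = W * Z) :
    (PowerSeries.mk fun l => MvPolynomial.pderiv i (g l))
      = - PowerSeries.C (R := A') (MvPolynomial.C ((p : ℂ) / q))
          * PowerSeries.X ^ i * z ^ (p + q + i - 1)
          * (z + PowerSeries.X * dW z) ∧
    (PowerSeries.mk fun n => MvPolynomial.pderiv i (coeff (R := A') n W))
      = PowerSeries.C (R := A') (MvPolynomial.C (1 / (q : ℂ)))
          * W ^ (i + 1) * Z ^ (q + i) :=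
  stmt18_general p q hq i hi g hg0 z hzp hinv W Z hWq hWZ
end
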